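/- arXiv:2507.08444 — 8 statements merged into one kernel-verified Lean document; each statement's English description precedes it below -/
import Mathlib

section
/- Let H be a real inner product space, let y, u, v, c ∈ H, let κ > 0 be a real number, and let α, β be real numbers. If (1/2)·‖y − u‖² + κ·α ≤ (1/2)·‖y − v‖² + κ·β, then α − β − ⟨c, u − v⟩ ≤ (‖y − v‖ + κ·‖c‖)² / (2κ). -/
open RealInnerProductSpace

theorem stmt_0 {H : Type*} [NormedAddCommGroup H] [InnerProductSpace ℝ H]
    (y u v c : H) (κ α β : ℝ) (hκ : 0 < κ)
    (h : (1/2) * ‖y - u‖^2 + κ * α ≤ (1/2) * ‖y - v‖^2 + κ * β) :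
    α - β - ⟪c, u - v⟫ ≤ (‖y - v‖ + κ * ‖c‖)^2 / (2 * κ) := by
  have h1 : ⟪c, u - v⟫ = ⟪c, y - v⟫ - ⟪c, y - u⟫ := by
    rw [← inner_sub_right]
    congr 1
    abel
  have h2 : ⟪c, y - u⟫ ≤ ‖c‖ * ‖y - u‖ := real_inner_le_norm c (y - u)
  have h3 : -⟪c, y - v⟫ ≤ ‖c‖ * ‖y - v‖ := by
    have h5 := real_inner_le_norm c (v - y)
    have h4 : ⟪c, v - y⟫ = -⟪c, y - v⟫ := by
      rw [← inner_neg_right]; congr 1; abel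
    rw [h4] at h5
    simpa [norm_sub_rev] using h5
  have hc : 0 ≤ ‖c‖ := norm_nonneg c
  have ha : 0 ≤ ‖y - u‖ := norm_nonneg _
  have key : (‖y - u‖ - κ * ‖c‖)^2 ≥ 0 := sq_nonneg _
  rw [h1, le_div_iff₀ (by positivity : (0:ℝ) < 2 * κ)]
  nlinarith [sq_nonneg (‖y - u‖ - κ * ‖c‖), sq_nonneg (‖y - v‖ + κ * ‖c‖)]
end

section
/- Let H be a real inner product space, let y, u, v, c ∈ H, let κ > 0 be a real number, and let α, β be real numbers. Assume (1/2)·‖y − u‖² + κ·α ≤ (1/2)·‖y − v‖² + κ·β and additionally α − β − ⟨c, u − v⟩ ≥ 0. Then ‖u − y‖ ≤ ‖y − v‖ + 2κ·‖c‖. -/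
open RealInnerProductSpace

theorem stmt_1 {H : Type*} [NormedAddCommGroup H] [InnerProductSpace ℝ H]
    (y u v c : H) (κ α β : ℝ) (hκ : 0 < κ)
    (h : (1/2) * ‖y - u‖^2 + κ * α ≤ (1/2) * ‖y - v‖^2 + κ * β)
    (hBregman : 0 ≤ α - β - ⟪c, u - v⟫) :
    ‖u - y‖ ≤ ‖y - v‖ + 2 * κ * ‖c‖ := by
  have hsplit : ⟪c, u - v⟫ = ⟪c, y - v⟫ - ⟪c, y - u⟫ := by
    rw [← inner_sub_right]; congr 1; abel
  have h1 := abs_le.mp (abs_real_inner_le_norm c (y - v))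
  have h2 := abs_le.mp (abs_real_inner_le_norm c (y - u))
  have ha : (0:ℝ) ≤ ‖y - u‖ := norm_nonneg _
  have hb : (0:ℝ) ≤ ‖y - v‖ := norm_nonneg _
  have hc : (0:ℝ) ≤ ‖c‖ := norm_nonneg _
  rw [norm_sub_rev u y]
  -- key quadratic inequality
  have key : ‖y - u‖^2 ≤ ‖y - v‖^2 + 2 * κ * ‖c‖ * (‖y - u‖ + ‖y - v‖) := by
    nlinarith [mul_le_mul_of_nonneg_left h1.1 hκ.le, mul_le_mul_of_nonneg_left h2.2 hκ.le,
      mul_le_mul_of_nonneg_left hBregman hκ.le]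
  nlinarith [key, sq_nonneg (‖y - u‖ + ‖y - v‖), mul_nonneg hκ.le hc]
end

section
/- Let (X, d) be a metric space with its Borel σ-algebra, let μ be a finite signed Borel measure on X, let t₁, …, tₛ ∈ X, let r > 0 be such that the closed balls B̄(tₖ, r) are pairwise disjoint, and let ε₂ > 0. Let η : X → ℝ be a bounded Borel function such that |η(x)| ≤ 1 − ε₂·d(x, tₖ)² for every k and every x ∈ B̄(tₖ, r), and |η(x)| ≤ 1 − ε₂·r² for every x in the far region F_r := X \ ⋃ₖ B̄(tₖ, r). Then |μ|(X) − ∫ η dμ ≥ ε₂·r²·|μ|(F_r) + ε₂·Σ_{k=1}^{s} ∫_{B̄(tₖ,r)} d(x, tₖ)² d|μ|(x). -/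
open MeasureTheory Metric

/-- Integral of a real function against a finite signed measure, via the
Jordan decomposition: `∫ f dμ = ∫ f dμ⁺ - ∫ f dμ⁻`. -/
noncomputable def signedIntegral {X : Type*} [MeasurableSpace X]
    (μ : SignedMeasure X) (f : X → ℝ) : ℝ :=
  (∫ x, f x ∂μ.toJordanDecomposition.posPart) -
    ∫ x, f x ∂μ.toJordanDecomposition.negPart

/-!
Write `ν = |μ|` and `U = ⋃ₖ B̄(tₖ, r)`. Since `∫ η dμ ≤ ∫ |η| dν`, the left-hand side is at least
`∫ (1 - |η|) dν`. Splitting this integral over the far region `Uᶜ` and the disjoint balls, the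
certificate bounds give `1 - |η| ≥ ε₂ r²` on `Uᶜ` and `1 - |η(x)| ≥ ε₂ d(x, tₖ)²` on `B̄(tₖ, r)`.
-/

namespace MeasureTheory

open Function

variable {X : Type*} [MeasurableSpace X]

theorem signedIntegral_le_integral_abs {μ : SignedMeasure X} {f : X → ℝ}
    (hf : Integrable f μ.totalVariation) :
    signedIntegral μ f ≤ ∫ x, |f x| ∂μ.totalVariation := by
  set p := μ.toJordanDecomposition.posPart
  set n := μ.toJordanDecomposition.negPart
  have hp : Integrable f p := hf.mono_measure (Measure.le_add_right le_rfl)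
  have hn : Integrable f n := hf.mono_measure (Measure.le_add_left le_rfl)
  have hpos : ∫ x, f x ∂p ≤ ∫ x, |f x| ∂p := (le_abs_self _).trans abs_integral_le_integral_abs
  have hneg : -∫ x, f x ∂n ≤ ∫ x, |f x| ∂n := (neg_le_abs _).trans abs_integral_le_integral_abs
  calc signedIntegral μ f ≤ (∫ x, |f x| ∂p) + ∫ x, |f x| ∂n := by
        unfold signedIntegral; linarith
    _ = ∫ x, |f x| ∂μ.totalVariation := (integral_add_measure hp.abs hn.abs).symm

theorem integral_eq_setIntegral_compl_iUnion_add_sum {E ι : Type*} [NormedAddCommGroup E]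
    [NormedSpace ℝ E] [Fintype ι] {μ : Measure X} {s : ι → Set X} {f : X → E}
    (hs : ∀ i, MeasurableSet (s i)) (hd : Pairwise (Disjoint on s)) (hf : Integrable f μ) :
    ∫ x, f x ∂μ = ∫ x in (⋃ i, s i)ᶜ, f x ∂μ + ∑ i, ∫ x in s i, f x ∂μ := by
  rw [← integral_iUnion_fintype hs hd fun i => hf.integrableOn, add_comm,
    integral_add_compl (MeasurableSet.iUnion hs) hf]

theorem integrableOn_dist_sq_closedBall {Y : Type*} [PseudoMetricSpace Y] [MeasurableSpace Y]
    [OpensMeasurableSpace Y] {μ : Measure Y} [IsFiniteMeasure μ] (c : Y) (r : ℝ) :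
    IntegrableOn (fun y => dist y c ^ 2) (closedBall c r) μ := by
  refine .of_bound (measure_lt_top _ _) (by fun_prop) (r ^ 2) ?_
  filter_upwards [ae_restrict_mem measurableSet_closedBall] with y hy
  rw [Real.norm_eq_abs, abs_of_nonneg (by positivity)]
  exact pow_le_pow_left₀ dist_nonneg (mem_closedBall.mp hy) 2

end MeasureTheory

theorem stmt_2_general {X : Type*} [MetricSpace X] [MeasurableSpace X] [BorelSpace X]
    (μ : SignedMeasure X) (s : ℕ) (t : Fin s → X) (r : ℝ)
    (hdisj : Pairwise fun k l => Disjoint (closedBall (t k) r) (closedBall (t l) r))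
    (ε₂ : ℝ)
    (η : X → ℝ) (hηmeas : Measurable η) (hηbdd : ∃ M, ∀ x, |η x| ≤ M)
    (hnear : ∀ k, ∀ x ∈ closedBall (t k) r, |η x| ≤ 1 - ε₂ * dist x (t k) ^ 2)
    (hfar : ∀ x ∈ (⋃ k, closedBall (t k) r)ᶜ, |η x| ≤ 1 - ε₂ * r ^ 2) :
    (μ.totalVariation Set.univ).toReal - signedIntegral μ η ≥
      ε₂ * r ^ 2 * (μ.totalVariation ((⋃ k, closedBall (t k) r)ᶜ)).toReal
      + ε₂ * ∑ k, ∫ x in closedBall (t k) r, dist x (t k) ^ 2 ∂μ.totalVariation := by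
  obtain ⟨M, hM⟩ := hηbdd
  set ν := μ.totalVariation
  set U := ⋃ k, closedBall (t k) r
  have hη : Integrable η ν := .of_bound hηmeas.aestronglyMeasurable M (ae_of_all _ hM)
  have hgap : Integrable (fun x => 1 - |η x|) ν := (integrable_const 1).sub hη.abs
  have hU : MeasurableSet U := .iUnion fun k => measurableSet_closedBall
  have hfar_gap : ε₂ * r ^ 2 * ν.real Uᶜ ≤ ∫ x in Uᶜ, 1 - |η x| ∂ν := by
    have := setIntegral_mono_on (integrableOn_const (C := ε₂ * r ^ 2)) hgap.integrableOn
      hU.compl fun x hx => by linarith [hfar x hx]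
    rwa [setIntegral_const, smul_eq_mul, mul_comm] at this
  have hnear_gap : ∀ k, ε₂ * ∫ x in closedBall (t k) r, dist x (t k) ^ 2 ∂ν ≤
      ∫ x in closedBall (t k) r, 1 - |η x| ∂ν := fun k => by
    rw [← integral_const_mul]
    exact setIntegral_mono_on ((integrableOn_dist_sq_closedBall (t k) r).const_mul ε₂)
      hgap.integrableOn measurableSet_closedBall fun x hx => by linarith [hnear k x hx]
  calc ε₂ * r ^ 2 * ν.real Uᶜ + ε₂ * ∑ k, ∫ x in closedBall (t k) r, dist x (t k) ^ 2 ∂ν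
      ≤ ∫ x in Uᶜ, 1 - |η x| ∂ν + ∑ k, ∫ x in closedBall (t k) r, 1 - |η x| ∂ν := by
        rw [Finset.mul_sum]
        exact add_le_add hfar_gap (Finset.sum_le_sum fun k _ => hnear_gap k)
    _ = ∫ x, 1 - |η x| ∂ν :=
        (integral_eq_setIntegral_compl_iUnion_add_sum (fun k => measurableSet_closedBall)
          hdisj hgap).symm
    _ = ν.real Set.univ - ∫ x, |η x| ∂ν := by
        rw [integral_sub (integrable_const 1) hη.abs, integral_const, smul_eq_mul, mul_one]
    _ ≤ _ := sub_le_sub_left (signedIntegral_le_integral_abs hη) _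

theorem stmt_2 {X : Type*} [MetricSpace X] [MeasurableSpace X] [BorelSpace X]
    (μ : SignedMeasure X) (s : ℕ) (t : Fin s → X) (r : ℝ) (hr : 0 < r)
    (hdisj : Pairwise fun k l => Disjoint (closedBall (t k) r) (closedBall (t l) r))
    (ε₂ : ℝ) (hε₂ : 0 < ε₂)
    (η : X → ℝ) (hηmeas : Measurable η) (hηbdd : ∃ M, ∀ x, |η x| ≤ M)
    (hnear : ∀ k, ∀ x ∈ closedBall (t k) r, |η x| ≤ 1 - ε₂ * dist x (t k) ^ 2)
    (hfar : ∀ x ∈ (⋃ k, closedBall (t k) r)ᶜ, |η x| ≤ 1 - ε₂ * r ^ 2) :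
    (μ.totalVariation Set.univ).toReal - signedIntegral μ η ≥
      ε₂ * r ^ 2 * (μ.totalVariation ((⋃ k, closedBall (t k) r)ᶜ)).toReal
      + ε₂ * ∑ k, ∫ x in closedBall (t k) r, dist x (t k) ^ 2 ∂μ.totalVariation :=
  stmt_2_general μ s t r hdisj ε₂ η hηmeas hηbdd hnear hfar
end

section
/- Let (X, d) be a compact metric space, let H be a real Hilbert space, and let Φ : X → H be continuous. For a finite signed Borel measure ν on X with Jordan decomposition ν = ν⁺ − ν⁻, write L(ν) := ∫ Φ dν⁺ − ∫ Φ dν⁻ (Bochner integrals) and ‖ν‖_TV := ν⁺(X) + ν⁻(X). Let t₁, …, tₛ ∈ X be distinct points, a₁, …, aₛ nonzero reals, and μ⁰ := Σ_{k=1}^{s} aₖ·δ_{tₖ}. Let r > 0 be such that the closed balls B̄(tₖ, r) are pairwise disjoint, let ε₂ > 0, let c ∈ H, and set η(x) := ⟨c, Φ(x)⟩. Assume: η(tₖ) = sign(aₖ) for every k; |η(x)| ≤ 1 − ε₂·d(x, tₖ)² for every k and x ∈ B̄(tₖ, r); and |η(x)| ≤ 1 − ε₂·r² for every x in F_r :=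 X \ ⋃ₖ B̄(tₖ, r). Let y ∈ H, κ > 0, γ := ‖y − L(μ⁰)‖, and let μ be a finite signed Borel measure on X with (1/2)·‖y − L(μ)‖² + κ·‖μ‖_TV ≤ (1/2)·γ² + κ·‖μ⁰‖_TV. Then |μ|(F_r) ≤ (γ + κ·‖c‖)² / (2κ·ε₂·r²), where |μ| = μ⁺ + μ⁻. -/
/-!
The certificate `η = ⟪c, Φ ·⟫` satisfies `|η| ≤ 1` everywhere and `|η| ≤ 1 - ε₂ r²` on the far
region `F`, so integrating `1 ∓ η` against the Jordan parts of `μ` gives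
`ε₂ r² |μ|(F) ≤ ‖μ‖_TV - ⟪c, L μ⟫`. Since `η` interpolates the signs of the spikes,
`‖μ⁰‖_TV ≤ Σ |aₖ| = ⟪c, L μ⁰⟫`. Near-optimality of `μ` then bounds `κ ε₂ r² |μ|(F)` by
`(γ² - R²)/2 + κ ⟪c, L μ⁰ - L μ⟫ ≤ (γ² - R²)/2 + κ ‖c‖ (γ + R)` with `R = ‖y - L μ‖`,
and completing the square in `R` gives the bound.
-/

open MeasureTheory Metric RealInnerProductSpace
open scoped NNReal

/-- Forward operator on finite signed measures: `L ν = ∫ Φ dν⁺ - ∫ Φ dν⁻`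
(Bochner integrals with respect to the Jordan decomposition). -/
noncomputable def forwardOp {X H : Type*} [MeasurableSpace X]
    [NormedAddCommGroup H] [NormedSpace ℝ H]
    (ν : SignedMeasure X) (Φ : X → H) : H :=
  (∫ x, Φ x ∂ν.toJordanDecomposition.posPart) -
    ∫ x, Φ x ∂ν.toJordanDecomposition.negPart

/-- Total variation norm of a finite signed measure: `‖ν‖_TV = ν⁺(X) + ν⁻(X)`. -/
noncomputable def tvNorm {X : Type*} [MeasurableSpace X] (ν : SignedMeasure X) : ℝ :=
  (ν.toJordanDecomposition.posPart Set.univ).toReal +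
    (ν.toJordanDecomposition.negPart Set.univ).toReal

section SignedMeasure

variable {X E : Type*} [MeasurableSpace X] [NormedAddCommGroup E] [NormedSpace ℝ E]
  (p n : Measure X) [IsFiniteMeasure p] [IsFiniteMeasure n]

theorem MeasureTheory.Measure.sub_add_eq_sub_add : p - n + n = n - p + p := by
  rw [← Measure.toSignedMeasure_eq_toSignedMeasure_iff, Measure.toSignedMeasure_add,
    Measure.toSignedMeasure_add, add_comm (n - p).toSignedMeasure,
    ← sub_eq_sub_iff_add_eq_add,
    ← Measure.sub_toSignedMeasure_eq_toSignedMeasure_sub]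

theorem tvNorm_toSignedMeasure_sub_le :
    tvNorm (p.toSignedMeasure - n.toSignedMeasure) ≤ p.real Set.univ + n.real Set.univ := by
  rw [tvNorm, Measure.toJordanDecomposition_toSignedMeasure_sub]
  exact add_le_add (ENNReal.toReal_mono (measure_ne_top _ _) (Measure.le_iff'.1 Measure.sub_le _))
    (ENNReal.toReal_mono (measure_ne_top _ _) (Measure.le_iff'.1 Measure.sub_le _))

theorem forwardOp_toSignedMeasure_sub {f : X → E} (hp : Integrable f p) (hn : Integrable f n) :
    forwardOp (p.toSignedMeasure - n.toSignedMeasure) f = ∫ x, f x ∂p - ∫ x, f x ∂n := by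
  have h := congrArg (fun m => ∫ x, f x ∂m) (Measure.sub_add_eq_sub_add p n)
  rw [integral_add_measure (hp.mono_measure Measure.sub_le) hn,
    integral_add_measure (hn.mono_measure Measure.sub_le) hp] at h
  rw [forwardOp, Measure.toJordanDecomposition_toSignedMeasure_sub,
    Measure.jordanDecompositionOfToSignedMeasureSub_posPart,
    Measure.jordanDecompositionOfToSignedMeasureSub_negPart, sub_eq_sub_iff_add_eq_add, h]
  abel

variable {ι : Type*} [Fintype ι] (t : ι → X) (a : ι → ℝ)

theorem measureReal_sum_smul_dirac (b : ι → ℝ≥0) (s : Set X) :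
    (∑ k, b k • Measure.dirac (t k)).real s = ∑ k, (b k : ℝ) * (Measure.dirac (t k)).real s := by
  rw [Measure.real, Measure.finsetSum_apply, ENNReal.toReal_sum (fun k _ => by finiteness)]
  simp [Measure.real]

theorem sum_smul_dirac_toSignedMeasure :
    ∑ k, a k • (Measure.dirac (t k)).toSignedMeasure =
      (∑ k, (a k).toNNReal • Measure.dirac (t k)).toSignedMeasure -
        (∑ k, (-a k).toNNReal • Measure.dirac (t k)).toSignedMeasure := by
  ext i hi
  simp [hi, measureReal_sum_smul_dirac, ← Finset.sum_sub_distrib, ← sub_mul]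

theorem tvNorm_sum_smul_dirac_le :
    tvNorm (∑ k, a k • (Measure.dirac (t k)).toSignedMeasure) ≤ ∑ k, |a k| := by
  refine (sum_smul_dirac_toSignedMeasure t a ▸ tvNorm_toSignedMeasure_sub_le _ _).trans_eq ?_
  simp [measureReal_sum_smul_dirac, ← Finset.sum_add_distrib]

theorem forwardOp_sum_smul_dirac [MeasurableSingletonClass X] [CompleteSpace E] (f : X → E) :
    forwardOp (∑ k, a k • (Measure.dirac (t k)).toSignedMeasure) f = ∑ k, a k • f (t k) := by
  have hf : ∀ (b : ℝ≥0) (x : X), Integrable f (b • Measure.dirac x) := fun _ _ =>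
    (integrable_dirac (by simp)).smul_measure_nnreal
  rw [sum_smul_dirac_toSignedMeasure, forwardOp_toSignedMeasure_sub _ _
      (integrable_finsetSum_measure.2 fun _ _ => hf _ _)
      (integrable_finsetSum_measure.2 fun _ _ => hf _ _),
    integral_finsetSum_measure fun _ _ => hf _ _, integral_finsetSum_measure fun _ _ => hf _ _]
  simp only [integral_smul_nnreal_measure, integral_dirac, ← Finset.sum_sub_distrib]
  refine Finset.sum_congr rfl fun k _ => ?_
  rw [NNReal.smul_def, NNReal.smul_def, ← sub_smul, Real.coe_toNNReal', Real.coe_toNNReal',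
    max_zero_sub_eq_self]

theorem mul_measureReal_le_sub_integral (m : Measure X) [IsFiniteMeasure m] {g : X → ℝ}
    (hg : Integrable g m) {F : Set X} (hF : MeasurableSet F) {δ : ℝ} (hg_le : ∀ x, g x ≤ 1)
    (hgF : ∀ x ∈ F, g x ≤ 1 - δ) :
    δ * m.real F ≤ m.real Set.univ - ∫ x, g x ∂m := by
  have hint : Integrable (fun x => 1 - g x) m := (integrable_const 1).sub hg
  calc δ * m.real F ≤ ∫ x in F, (1 - g x) ∂m :=
        setIntegral_ge_of_const_le_real hF (measure_ne_top _ _)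
          (fun x hx => by linarith [hgF x hx]) hint.integrableOn
    _ ≤ ∫ x, (1 - g x) ∂m :=
        setIntegral_le_integral hint (ae_of_all _ fun x => sub_nonneg.2 (hg_le x))
    _ = m.real Set.univ - ∫ x, g x ∂m := by
        rw [integral_sub (integrable_const 1) hg, integral_const, smul_eq_mul, mul_one]

theorem mul_totalVariation_le_tvNorm_sub_forwardOp (ν : SignedMeasure X) {g : X → ℝ}
    (hg : Measurable g) (hg_le : ∀ x, |g x| ≤ 1) {F : Set X} (hF : MeasurableSet F) {δ : ℝ}
    (hgF : ∀ x ∈ F, |g x| ≤ 1 - δ) :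
    δ * (ν.totalVariation F).toReal ≤ tvNorm ν - forwardOp ν g := by
  have hint : ∀ (m : Measure X) [IsFiniteMeasure m], Integrable g m := fun m _ =>
    .of_bound hg.aestronglyMeasurable 1 (ae_of_all _ hg_le)
  have hpos := mul_measureReal_le_sub_integral ν.toJordanDecomposition.posPart (hint _) hF
    (fun x => (abs_le.1 (hg_le x)).2) (fun x hx => (abs_le.1 (hgF x hx)).2)
  have hneg := mul_measureReal_le_sub_integral ν.toJordanDecomposition.negPart (hint _).neg hF
    (fun x => neg_le.1 (abs_le.1 (hg_le x)).1) (fun x hx => neg_le.1 (abs_le.1 (hgF x hx)).1)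
  rw [Pi.neg_def, integral_neg] at hneg
  rw [SignedMeasure.totalVariation, Measure.add_apply,
    ENNReal.toReal_add (measure_ne_top _ _) (measure_ne_top _ _), tvNorm, forwardOp]
  simp only [Measure.real] at hpos hneg
  linarith

theorem inner_forwardOp {H : Type*} [NormedAddCommGroup H] [InnerProductSpace ℝ H]
    [CompleteSpace H] (ν : SignedMeasure X) {Φ : X → H}
    (hpos : Integrable Φ ν.toJordanDecomposition.posPart)
    (hneg : Integrable Φ ν.toJordanDecomposition.negPart) (c : H) :
    ⟪c, forwardOp ν Φ⟫ = forwardOp ν fun x => ⟪c, Φ x⟫ := by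
  rw [forwardOp, forwardOp, inner_sub_right, integral_inner hpos, integral_inner hneg]

end SignedMeasure

theorem mul_sub_inner_le_of_objective_le {H : Type*} [NormedAddCommGroup H]
    [InnerProductSpace ℝ H] {y v v₀ c : H} {κ S S₀ : ℝ} (hκ : 0 ≤ κ) (hS₀ : S₀ ≤ ⟪c, v₀⟫)
    (hopt : 1 / 2 * ‖y - v‖ ^ 2 + κ * S ≤ 1 / 2 * ‖y - v₀‖ ^ 2 + κ * S₀) :
    κ * (S - ⟪c, v⟫) ≤ (‖y - v₀‖ + κ * ‖c‖) ^ 2 / 2 := by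
  have hpair : ⟪c, v₀⟫ - ⟪c, v⟫ ≤ ‖c‖ * (‖y - v₀‖ + ‖y - v‖) := by
    rw [← inner_sub_right]
    refine (real_inner_le_norm _ _).trans (mul_le_mul_of_nonneg_left ?_ (norm_nonneg c))
    calc ‖v₀ - v‖ = ‖(y - v) - (y - v₀)‖ := by congr 1; abel
      _ ≤ ‖y - v‖ + ‖y - v₀‖ := norm_sub_le _ _
      _ = ‖y - v₀‖ + ‖y - v‖ := add_comm _ _
  nlinarith [mul_le_mul_of_nonneg_left hpair hκ, mul_le_mul_of_nonneg_left hS₀ hκ,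
    sq_nonneg (‖y - v‖ - κ * ‖c‖)]

theorem Real.mul_sign_eq_abs (a : ℝ) : a * Real.sign a = |a| := by
  rcases lt_trichotomy a 0 with h | rfl | h
  · rw [Real.sign_of_neg h, abs_of_neg h, mul_neg_one]
  · simp
  · rw [Real.sign_of_pos h, abs_of_pos h, mul_one]

theorem stmt_3_general {X H : Type*} [MetricSpace X] [CompactSpace X]
    [MeasurableSpace X] [BorelSpace X]
    [NormedAddCommGroup H] [InnerProductSpace ℝ H] [CompleteSpace H]
    (Φ : X → H) (hΦ : Continuous Φ)
    (s : ℕ) (t : Fin s → X)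
    (a : Fin s → ℝ)
    (μ0 : SignedMeasure X)
    (hμ0 : μ0 = ∑ k, a k • (Measure.dirac (t k)).toSignedMeasure)
    (r : ℝ) (hr : 0 < r)
    (ε₂ : ℝ) (hε₂ : 0 < ε₂) (c : H)
    (hsign : ∀ k, ⟪c, Φ (t k)⟫ = Real.sign (a k))
    (hnear : ∀ k, ∀ x ∈ closedBall (t k) r, |⟪c, Φ x⟫| ≤ 1 - ε₂ * dist x (t k) ^ 2)
    (hfar : ∀ x ∈ (⋃ k, closedBall (t k) r)ᶜ, |⟪c, Φ x⟫| ≤ 1 - ε₂ * r ^ 2)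
    (y : H) (κ : ℝ) (hκ : 0 < κ) (γ : ℝ) (hγ : γ = ‖y - forwardOp μ0 Φ‖)
    (μ : SignedMeasure X)
    (hopt : (1/2) * ‖y - forwardOp μ Φ‖^2 + κ * tvNorm μ ≤ (1/2) * γ^2 + κ * tvNorm μ0) :
    (μ.totalVariation ((⋃ k, closedBall (t k) r)ᶜ)).toReal ≤
      (γ + κ * ‖c‖)^2 / (2 * κ * ε₂ * r^2) := by
  subst hγ
  have hΦint : ∀ (m : Measure X) [IsFiniteMeasure m], Integrable Φ m := fun _ _ =>
    hΦ.integrable_of_hasCompactSupport (.of_compactSpace Φ)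
  have hη_le : ∀ x, |⟪c, Φ x⟫| ≤ 1 := by
    intro x
    by_cases hx : x ∈ ⋃ k, closedBall (t k) r
    · obtain ⟨k, hk⟩ := Set.mem_iUnion.1 hx
      linarith [hnear k x hk, mul_nonneg hε₂.le (sq_nonneg (dist x (t k)))]
    · linarith [hfar x hx, mul_nonneg hε₂.le (sq_nonneg r)]
  have hfar_mass : ε₂ * r ^ 2 * (μ.totalVariation ((⋃ k, closedBall (t k) r)ᶜ)).toReal ≤
      tvNorm μ - ⟪c, forwardOp μ Φ⟫ := by
    rw [inner_forwardOp μ (hΦint _) (hΦint _)]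
    exact mul_totalVariation_le_tvNorm_sub_forwardOp μ (continuous_const.inner hΦ).measurable
      hη_le (MeasurableSet.iUnion fun _ => measurableSet_closedBall).compl hfar
  have hcert : tvNorm μ0 ≤ ⟪c, forwardOp μ0 Φ⟫ := by
    simp only [hμ0, forwardOp_sum_smul_dirac, inner_sum, inner_smul_right, hsign,
      Real.mul_sign_eq_abs]
    exact tvNorm_sum_smul_dirac_le t a
  have hgap := mul_sub_inner_le_of_objective_le hκ.le hcert hopt
  rw [le_div_iff₀ (by positivity)]
  linarith [mul_le_mul_of_nonneg_left hfar_mass hκ.le]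

theorem stmt_3 {X H : Type*} [MetricSpace X] [CompactSpace X]
    [MeasurableSpace X] [BorelSpace X]
    [NormedAddCommGroup H] [InnerProductSpace ℝ H] [CompleteSpace H]
    (Φ : X → H) (hΦ : Continuous Φ)
    (s : ℕ) (t : Fin s → X) (ht : Function.Injective t)
    (a : Fin s → ℝ) (ha : ∀ k, a k ≠ 0)
    (μ0 : SignedMeasure X)
    (hμ0 : μ0 = ∑ k, a k • (Measure.dirac (t k)).toSignedMeasure)
    (r : ℝ) (hr : 0 < r)
    (hdisj : Pairwise fun k l => Disjoint (closedBall (t k) r) (closedBall (t l) r))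
    (ε₂ : ℝ) (hε₂ : 0 < ε₂) (c : H)
    (hsign : ∀ k, ⟪c, Φ (t k)⟫ = Real.sign (a k))
    (hnear : ∀ k, ∀ x ∈ closedBall (t k) r, |⟪c, Φ x⟫| ≤ 1 - ε₂ * dist x (t k) ^ 2)
    (hfar : ∀ x ∈ (⋃ k, closedBall (t k) r)ᶜ, |⟪c, Φ x⟫| ≤ 1 - ε₂ * r ^ 2)
    (y : H) (κ : ℝ) (hκ : 0 < κ) (γ : ℝ) (hγ : γ = ‖y - forwardOp μ0 Φ‖)
    (μ : SignedMeasure X)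
    (hopt : (1/2) * ‖y - forwardOp μ Φ‖^2 + κ * tvNorm μ ≤ (1/2) * γ^2 + κ * tvNorm μ0) :
    (μ.totalVariation ((⋃ k, closedBall (t k) r)ᶜ)).toReal ≤
      (γ + κ * ‖c‖)^2 / (2 * κ * ε₂ * r^2) :=
  stmt_3_general Φ hΦ s t a μ0 hμ0 r hr ε₂ hε₂ c hsign hnear hfar y κ hκ γ hγ μ hopt
end

section
/- Let (X, d) be a metric space with its Borel σ-algebra, let t₁, …, tₛ ∈ X be distinct points, let a₁, …, aₛ be real numbers, let μ⁰ := Σ_{l=1}^{s} a_l·δ_{t_l}, and let r > 0 be such that the closed balls B̄(t_l, r) are pairwise disjoint. Let ε₂ > 0 with ε₂·r² ≤ 1, fix j ∈ {1, …, s}, and let η : X → ℝ be a bounded Borel function such that: |1 − η(x)| ≤ ε₂·d(x, t_j)² for all x ∈ B̄(t_j, r); |η(x)| ≤ ε₂·d(x, t_l)² for every l ≠ j and all x ∈ B̄(t_l, r); and |η(x)| ≤ 1 − ε₂·r² for all x in F_r := X \ ⋃_l B̄(t_l, r). Then for every finite signed Borel measure μ on X: |μ(B̄(t_j, r)) − a_j|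 ≤ |∫ η dμ − ∫ η dμ⁰| + ε₂·Σ_{l=1}^{s} ∫_{B̄(t_l,r)} d(x, t_l)² d|μ|(x) + (1 − ε₂·r²)·|μ|(F_r). -/
open MeasureTheory Metric

/-!
Put `g := 𝟙_{B̄(t_j, r)} - η`. The near-region bounds vanish at the centres, so `η (t_j) = 1` and
`η (t_l) = 0` for `l ≠ j`; hence `∫ η dμ⁰ = a_j` and
`μ(B̄(t_j, r)) - a_j = ∫ g dμ + (∫ η dμ - ∫ η dμ⁰)`. Finally `|∫ g dμ| ≤ ∫ |g| d|μ|`, and the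
hypotheses on `η` bound `|g|` by `ε₂ d(x, t_l)²` on each ball `B̄(t_l, r)` and by `1 - ε₂ r²` on
the far region.
-/

lemma abs_indicator_one_sub_le_of_mem {X ι : Type*} {B : ι → Set X}
    (hdisj : Pairwise (Function.onFun Disjoint B)) {j : ι} {f : X → ℝ} {φ : ι → X → ℝ}
    (hj : ∀ x ∈ B j, |1 - f x| ≤ φ j x) (hl : ∀ l ≠ j, ∀ x ∈ B l, |f x| ≤ φ l x) {l : ι} {x : X}
    (hx : x ∈ B l) :
    |(B j).indicator 1 x - f x| ≤ φ l x := by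
  by_cases hlj : l = j
  · subst hlj
    simpa [hx] using hj x hx
  · have hxj : x ∉ B j := Set.disjoint_left.1 (hdisj hlj) hx
    simpa [hxj] using hl l hlj x hx

section SignedIntegral

variable {X : Type*} [MeasurableSpace X] {f g : X → ℝ} {C D : ℝ}

lemma Measurable.integrable_of_abs_le {ν : Measure X} [IsFiniteMeasure ν] (hf : Measurable f)
    (hC : ∀ x, |f x| ≤ C) : Integrable f ν :=
  .of_bound hf.aestronglyMeasurable C (.of_forall hC)

lemma signedIntegral_eq_of_eq_sub {ν : SignedMeasure X} {P N : Measure X} [IsFiniteMeasure P]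
    [IsFiniteMeasure N] (h : ν = P.toSignedMeasure - N.toSignedMeasure) (hf : Measurable f)
    (hC : ∀ x, |f x| ≤ C) :
    signedIntegral ν f = ∫ x, f x ∂P - ∫ x, f x ∂N := by
  set J := ν.toJordanDecomposition
  have hPN : J.posPart + N = P + J.negPart := by
    rw [← Measure.toSignedMeasure_eq_toSignedMeasure_iff, Measure.toSignedMeasure_add,
      Measure.toSignedMeasure_add, ← sub_eq_sub_iff_add_eq_add, ← h]
    exact ν.toSignedMeasure_toJordanDecomposition
  have hint := congrArg (fun m => ∫ x, f x ∂m) hPN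
  simp only [integral_add_measure (hf.integrable_of_abs_le hC) (hf.integrable_of_abs_le hC)]
    at hint
  rw [signedIntegral]
  linarith

lemma signedIntegral_zero_measure : signedIntegral (0 : SignedMeasure X) f = 0 := by
  simp [signedIntegral, SignedMeasure.toJordanDecomposition_zero]

lemma signedIntegral_add_measure (μ ν : SignedMeasure X) (hf : Measurable f)
    (hC : ∀ x, |f x| ≤ C) :
    signedIntegral (μ + ν) f = signedIntegral μ f + signedIntegral ν f := by
  set Jμ := μ.toJordanDecomposition
  set Jν := ν.toJordanDecomposition
  have h : μ + ν = (Jμ.posPart + Jν.posPart).toSignedMeasure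
      - (Jμ.negPart + Jν.negPart).toSignedMeasure := by
    conv_lhs => rw [← μ.toSignedMeasure_toJordanDecomposition,
      ← ν.toSignedMeasure_toJordanDecomposition]
    simp only [JordanDecomposition.toSignedMeasure, Measure.toSignedMeasure_add]
    abel
  have hint {m : Measure X} [IsFiniteMeasure m] : Integrable f m := hf.integrable_of_abs_le hC
  rw [signedIntegral_eq_of_eq_sub h hf hC, integral_add_measure hint hint,
    integral_add_measure hint hint, signedIntegral, signedIntegral]
  ring

lemma signedIntegral_finset_sum_measure {ι : Type*} (s : Finset ι) (ν : ι → SignedMeasure X)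
    (hf : Measurable f) (hC : ∀ x, |f x| ≤ C) :
    signedIntegral (∑ i ∈ s, ν i) f = ∑ i ∈ s, signedIntegral (ν i) f := by
  induction s using Finset.cons_induction with
  | empty => simp [signedIntegral_zero_measure]
  | cons i s hi ih =>
    rw [Finset.sum_cons, Finset.sum_cons, signedIntegral_add_measure _ _ hf hC, ih]

lemma signedIntegral_smul_toSignedMeasure (c : ℝ) (m : Measure X) [IsFiniteMeasure m]
    (hf : Measurable f) (hC : ∀ x, |f x| ≤ C) :
    signedIntegral (c • m.toSignedMeasure) f = c * ∫ x, f x ∂m := by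
  have h : c • m.toSignedMeasure
      = (c.toNNReal • m).toSignedMeasure - ((-c).toNNReal • m).toSignedMeasure := by
    ext i hi
    simp only [FunLike.coe_smul, FunLike.coe_sub, Pi.smul_apply, Pi.sub_apply,
      Measure.toSignedMeasure_apply_measurable hi, measureReal_nnreal_smul_apply, smul_eq_mul,
      ← sub_mul, Real.coe_toNNReal', max_zero_sub_max_neg_zero_eq_self]
  rw [signedIntegral_eq_of_eq_sub h hf hC, integral_smul_nnreal_measure,
    integral_smul_nnreal_measure, NNReal.smul_def, NNReal.smul_def, ← sub_smul,
    Real.coe_toNNReal', Real.coe_toNNReal', max_zero_sub_max_neg_zero_eq_self, smul_eq_mul]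

lemma signedIntegral_sum_dirac [MeasurableSingletonClass X] {ι : Type*} (s : Finset ι)
    (a : ι → ℝ) (t : ι → X) (hf : Measurable f) (hC : ∀ x, |f x| ≤ C) :
    signedIntegral (∑ i ∈ s, a i • (Measure.dirac (t i)).toSignedMeasure) f
      = ∑ i ∈ s, a i * f (t i) := by
  simp only [signedIntegral_finset_sum_measure _ _ hf hC,
    signedIntegral_smul_toSignedMeasure _ _ hf hC, integral_dirac]

lemma signedIntegral_sub (μ : SignedMeasure X) (hf : Measurable f) (hC : ∀ x, |f x| ≤ C)
    (hg : Measurable g) (hD : ∀ x, |g x| ≤ D) :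
    signedIntegral μ (f - g) = signedIntegral μ f - signedIntegral μ g := by
  simp only [signedIntegral, Pi.sub_apply]
  rw [integral_sub (hf.integrable_of_abs_le hC) (hg.integrable_of_abs_le hD),
    integral_sub (hf.integrable_of_abs_le hC) (hg.integrable_of_abs_le hD)]
  ring

lemma signedIntegral_indicator_one (μ : SignedMeasure X) {s : Set X} (hs : MeasurableSet s) :
    signedIntegral μ (s.indicator 1) = μ s := by
  conv_rhs => rw [← μ.toSignedMeasure_toJordanDecomposition]
  rw [signedIntegral, integral_indicator_one hs, integral_indicator_one hs,
    JordanDecomposition.toSignedMeasure, Measure.toSignedMeasure_sub_apply hs]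

lemma abs_signedIntegral_le_integral_abs (μ : SignedMeasure X) (hf : Measurable f)
    (hC : ∀ x, |f x| ≤ C) :
    |signedIntegral μ f| ≤ ∫ x, |f x| ∂μ.totalVariation := by
  have hint {m : Measure X} [IsFiniteMeasure m] : Integrable f m := hf.integrable_of_abs_le hC
  rw [signedIntegral, SignedMeasure.totalVariation, integral_add_measure hint.abs hint.abs]
  exact (abs_sub _ _).trans (add_le_add (abs_integral_le_integral_abs)
    (abs_integral_le_integral_abs))

lemma abs_measure_sub_signedIntegral_le (μ ν : SignedMeasure X) {S : Set X}
    (hS : MeasurableSet S) (hf : Measurable f) (hC : ∀ x, |f x| ≤ C) :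
    |μ S - signedIntegral ν f| ≤ |signedIntegral μ f - signedIntegral ν f|
      + ∫ x, |S.indicator 1 x - f x| ∂μ.totalVariation := by
  have hS1 : Measurable (S.indicator (1 : X → ℝ)) := measurable_one.indicator hS
  have hS1_le : ∀ x, |S.indicator (1 : X → ℝ) x| ≤ 1 := fun x => by
    by_cases hx : x ∈ S <;> simp [hx]
  have hsplit : μ S - signedIntegral ν f
      = signedIntegral μ (S.indicator 1 - f) + (signedIntegral μ f - signedIntegral ν f) := by
    rw [signedIntegral_sub μ hS1 hS1_le hf hC, signedIntegral_indicator_one μ hS]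
    ring
  rw [hsplit, add_comm]
  grw [abs_add_le, abs_signedIntegral_le_integral_abs μ (hS1.sub hf)
    fun x => (abs_sub _ _).trans (add_le_add (hS1_le x) (hC x))]
  rfl

end SignedIntegral

section Localization

variable {X : Type*} [MeasurableSpace X]

lemma integral_le_sum_setIntegral_add_mul_measureReal_compl {ι : Type*} [Fintype ι]
    {τ : Measure X} [IsFiniteMeasure τ] {B : ι → Set X} (hB : ∀ i, MeasurableSet (B i))
    (hdisj : Pairwise (Function.onFun Disjoint B)) {F : X → ℝ} (hF : Integrable F τ) {φ : ι → X → ℝ}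
    (hφ : ∀ i, IntegrableOn (φ i) (B i) τ) (hFφ : ∀ i, ∀ x ∈ B i, F x ≤ φ i x) {c : ℝ}
    (hFc : ∀ x ∈ (⋃ i, B i)ᶜ, F x ≤ c) :
    ∫ x, F x ∂τ ≤ ∑ i, ∫ x in B i, φ i x ∂τ + c * τ.real (⋃ i, B i)ᶜ := by
  have hU : MeasurableSet (⋃ i, B i) := .iUnion hB
  rw [← integral_add_compl hU hF, integral_iUnion_fintype hB hdisj fun i => hF.integrableOn]
  refine add_le_add (Finset.sum_le_sum fun i _ =>
    setIntegral_mono_on hF.integrableOn (hφ i) (hB i) (hFφ i)) ?_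
  calc ∫ x in (⋃ i, B i)ᶜ, F x ∂τ ≤ ∫ _ in (⋃ i, B i)ᶜ, c ∂τ :=
        setIntegral_mono_on hF.integrableOn (integrableOn_const (measure_ne_top _ _))
          hU.compl hFc
    _ = c * τ.real (⋃ i, B i)ᶜ := by rw [setIntegral_const, smul_eq_mul, mul_comm]

lemma integrableOn_dist_sq_closedBall [PseudoMetricSpace X] [OpensMeasurableSpace X]
    (τ : Measure X) [IsFiniteMeasure τ] (c : X) (r : ℝ) :
    IntegrableOn (fun x => dist x c ^ 2) (closedBall c r) τ := by
  refine Measure.integrableOn_of_bounded (M := r ^ 2) (measure_ne_top τ _)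
    ((continuous_id.dist continuous_const).measurable.pow_const 2).aestronglyMeasurable
    ((ae_restrict_iff' measurableSet_closedBall).2 (.of_forall fun x hx => ?_))
  rw [Real.norm_eq_abs, abs_of_nonneg (by positivity)]
  exact pow_le_pow_left₀ dist_nonneg (mem_closedBall.1 hx) 2

end Localization

theorem stmt_4_general {X : Type*} [MetricSpace X] [MeasurableSpace X] [BorelSpace X]
    (s : ℕ) (t : Fin s → X) (a : Fin s → ℝ)
    (μ0 : SignedMeasure X)
    (hμ0 : μ0 = ∑ l, a l • (Measure.dirac (t l)).toSignedMeasure)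
    (r : ℝ) (hr : 0 < r)
    (hdisj : Pairwise fun k l => Disjoint (closedBall (t k) r) (closedBall (t l) r))
    (ε₂ : ℝ)
    (j : Fin s)
    (η : X → ℝ) (hηmeas : Measurable η) (hηbdd : ∃ M, ∀ x, |η x| ≤ M)
    (hj : ∀ x ∈ closedBall (t j) r, |1 - η x| ≤ ε₂ * dist x (t j) ^ 2)
    (hl : ∀ l, l ≠ j → ∀ x ∈ closedBall (t l) r, |η x| ≤ ε₂ * dist x (t l) ^ 2)
    (hfar : ∀ x ∈ (⋃ l, closedBall (t l) r)ᶜ, |η x| ≤ 1 - ε₂ * r ^ 2)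
    (μ : SignedMeasure X) :
    |μ (closedBall (t j) r) - a j| ≤
      |signedIntegral μ η - signedIntegral μ0 η|
      + ε₂ * ∑ l, ∫ x in closedBall (t l) r, dist x (t l) ^ 2 ∂μ.totalVariation
      + (1 - ε₂ * r ^ 2) * (μ.totalVariation ((⋃ l, closedBall (t l) r)ᶜ)).toReal := by
  obtain ⟨M, hM⟩ := hηbdd
  have hηj : 1 = η (t j) := by
    simpa [sub_eq_zero] using hj (t j) (mem_closedBall_self hr.le)
  have hηl : ∀ l ≠ j, η (t l) = 0 := fun l hlj => by
    simpa using hl l hlj (t l) (mem_closedBall_self hr.le)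
  have hμ0η : signedIntegral μ0 η = a j := by
    rw [hμ0, signedIntegral_sum_dirac _ _ _ hηmeas hM,
      Finset.sum_eq_single j (fun l _ hlj => by simp [hηl l hlj]) (by simp), ← hηj, mul_one]
  have hfar' : ∀ x ∈ (⋃ l, closedBall (t l) r)ᶜ,
      |(closedBall (t j) r).indicator 1 x - η x| ≤ 1 - ε₂ * r ^ 2 := fun x hx => by
    have hxj : x ∉ closedBall (t j) r := fun hxj => hx (Set.mem_iUnion.2 ⟨j, hxj⟩)
    simpa [hxj] using hfar x hx
  have hsplit := integral_le_sum_setIntegral_add_mul_measureReal_compl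
    (fun l => measurableSet_closedBall) hdisj
    (((integrable_const 1).indicator measurableSet_closedBall).sub
      (hηmeas.integrable_of_abs_le hM)).abs
    (fun l => (integrableOn_dist_sq_closedBall μ.totalVariation (t l) r).const_mul ε₂)
    (fun l x => abs_indicator_one_sub_le_of_mem hdisj hj hl) hfar'
  simp only [integral_const_mul, ← Finset.mul_sum, measureReal_def, Pi.sub_apply] at hsplit
  calc |μ (closedBall (t j) r) - a j| = |μ (closedBall (t j) r) - signedIntegral μ0 η| := by
        rw [hμ0η]
    _ ≤ |signedIntegral μ η - signedIntegral μ0 η|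
          + ∫ x, |(closedBall (t j) r).indicator 1 x - η x| ∂μ.totalVariation :=
        abs_measure_sub_signedIntegral_le μ μ0 measurableSet_closedBall hηmeas hM
    _ ≤ _ := by linarith

theorem stmt_4 {X : Type*} [MetricSpace X] [MeasurableSpace X] [BorelSpace X]
    (s : ℕ) (t : Fin s → X) (ht : Function.Injective t) (a : Fin s → ℝ)
    (μ0 : SignedMeasure X)
    (hμ0 : μ0 = ∑ l, a l • (Measure.dirac (t l)).toSignedMeasure)
    (r : ℝ) (hr : 0 < r)
    (hdisj : Pairwise fun k l => Disjoint (closedBall (t k) r) (closedBall (t l) r))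
    (ε₂ : ℝ) (hε₂ : 0 < ε₂) (hε₂r : ε₂ * r ^ 2 ≤ 1)
    (j : Fin s)
    (η : X → ℝ) (hηmeas : Measurable η) (hηbdd : ∃ M, ∀ x, |η x| ≤ M)
    (hj : ∀ x ∈ closedBall (t j) r, |1 - η x| ≤ ε₂ * dist x (t j) ^ 2)
    (hl : ∀ l, l ≠ j → ∀ x ∈ closedBall (t l) r, |η x| ≤ ε₂ * dist x (t l) ^ 2)
    (hfar : ∀ x ∈ (⋃ l, closedBall (t l) r)ᶜ, |η x| ≤ 1 - ε₂ * r ^ 2)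
    (μ : SignedMeasure X) :
    |μ (closedBall (t j) r) - a j| ≤
      |signedIntegral μ η - signedIntegral μ0 η|
      + ε₂ * ∑ l, ∫ x in closedBall (t l) r, dist x (t l) ^ 2 ∂μ.totalVariation
      + (1 - ε₂ * r ^ 2) * (μ.totalVariation ((⋃ l, closedBall (t l) r)ᶜ)).toReal :=
  stmt_4_general s t a μ0 hμ0 r hr hdisj ε₂ j η hηmeas hηbdd hj hl hfar μ
end

section
/- Let d ≥ 1 be an integer and let h ∈ ℝ^d satisfy ‖h‖₂ ≥ √3/(2d). Then Ψ₁(h) = ∏_{i=1}^{d} sinc(h_i/4)⁴ ≤ 1 − 1/(256·d³). -/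
/-- The cardinal sine function: `sinc z = sin z / z` for `z ≠ 0`, `sinc 0 = 1`. -/
noncomputable def sinc (x : ℝ) : ℝ := if x = 0 then 1 else Real.sin x / x

lemma sinc_abs (x : ℝ) : sinc |x| = sinc x := by
  rcases lt_trichotomy x 0 with hx | hx | hx
  · rw [abs_of_neg hx]
    unfold sinc
    rw [if_neg (by linarith), if_neg (ne_of_lt hx), Real.sin_neg]
    ring
  · simp [hx]
  · rw [abs_of_pos hx]

lemma sinc_sq_le_one (x : ℝ) : sinc x ^ 2 ≤ 1 := by
  unfold sinc
  split_ifs with hx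
  · norm_num
  · rw [div_pow, div_le_one (by positivity)]
    exact Real.sin_sq_le_sq

lemma sinc_nonneg (x : ℝ) (h0 : 0 ≤ x) (h2 : x ≤ 2) : 0 ≤ sinc x := by
  unfold sinc
  split_ifs with hx
  · norm_num
  · have hπ : x ≤ Real.pi := le_trans h2 (by linarith [Real.pi_gt_three])
    exact div_nonneg (Real.sin_nonneg_of_nonneg_of_le_pi h0 hπ) h0

lemma sinc_le_one (x : ℝ) (h0 : 0 ≤ x) : sinc x ≤ 1 := by
  unfold sinc
  split_ifs with hx
  · norm_num
  · rw [div_le_one (lt_of_le_of_ne h0 (Ne.symm hx))]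
    exact Real.sin_le h0

/-- Key quantitative bound for small arguments: `sinc x ≤ 1 - x²/12` for `0 ≤ x ≤ 2`. -/
lemma sinc_le_of_le_two (x : ℝ) (h0 : 0 ≤ x) (h2 : x ≤ 2) : sinc x ≤ 1 - x ^ 2 / 12 := by
  rcases eq_or_lt_of_le h0 with hx0 | hx0
  · simp [sinc, ← hx0]
  have hne : x ≠ 0 := ne_of_gt hx0
  set y := x / 2 with hy
  have hy0 : 0 < y := by positivity
  have hy1 : |y| ≤ 1 := by rw [abs_of_pos hy0]; linarith
  have hcos := Real.cos_bound hy1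
  have hcosle : Real.cos y ≤ 1 - y ^ 2 / 2 + y ^ 4 * (5 / 96) := by
    have := abs_le.1 hcos
    rw [abs_of_pos hy0] at this
    linarith [this.2]
  have hcos0 : 0 ≤ Real.cos y := by
    apply Real.cos_nonneg_of_mem_Icc
    constructor
    · linarith [Real.pi_gt_three]
    · linarith [Real.pi_gt_three]
  have hsiny : Real.sin y ≤ y := Real.sin_le hy0.le
  have hsiny0 : 0 ≤ Real.sin y :=
    Real.sin_nonneg_of_nonneg_of_le_pi hy0.le (by linarith [Real.pi_gt_three])
  have hdouble : Real.sin x = 2 * Real.sin y * Real.cos y := by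
    have : x = 2 * y := by rw [hy]; ring
    rw [this, Real.sin_two_mul]
  have hsinc : sinc x = Real.sin x / x := if_neg hne
  rw [hsinc, hdouble]
  have hstep : 2 * Real.sin y * Real.cos y / x ≤ Real.cos y := by
    rw [div_le_iff₀ hx0]
    nlinarith [Real.cos_le_one y]
  refine hstep.trans (hcosle.trans ?_)
  have hy2 : y ^ 2 ≤ 1 := by nlinarith
  have : y ^ 2 = x ^ 2 / 4 := by rw [hy]; ring
  nlinarith

lemma key (d : ℕ) (hd : 1 ≤ d) (x : ℝ) (hx : 3 / (64 * (d : ℝ) ^ 3) ≤ x ^ 2) :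
    sinc x ^ 4 ≤ 1 - 1 / (256 * (d : ℝ) ^ 3) := by
  have hd1 : (1 : ℝ) ≤ (d : ℝ) := by exact_mod_cast hd
  have hd3 : (1 : ℝ) ≤ (d : ℝ) ^ 3 := one_le_pow₀ hd1
  rw [← sinc_abs]
  set a := |x| with ha
  have ha0 : 0 ≤ a := abs_nonneg x
  have ha2 : a ^ 2 = x ^ 2 := sq_abs x
  rcases le_or_gt a 2 with h2 | h2
  · have h1 : sinc a ≤ 1 - a ^ 2 / 12 := sinc_le_of_le_two a ha0 h2
    have hnn : 0 ≤ sinc a := sinc_nonneg a ha0 h2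
    have hle1 : sinc a ≤ 1 := sinc_le_one a ha0
    have hpow : sinc a ^ 4 ≤ sinc a := by
      calc sinc a ^ 4 ≤ sinc a ^ 1 := pow_le_pow_of_le_one hnn hle1 (by norm_num)
      _ = sinc a := pow_one _
    refine hpow.trans (h1.trans ?_)
    have : 3 / (64 * (d : ℝ) ^ 3) ≤ a ^ 2 := by rw [ha2]; exact hx
    have hdpos : (0:ℝ) < (d : ℝ) ^ 3 := by positivity
    rw [sub_le_sub_iff_left, div_le_div_iff₀ (by positivity) (by norm_num)]
    rw [div_le_iff₀ (by positivity)] at this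
    nlinarith
  · have hsq : sinc a ^ 2 ≤ 1 / a ^ 2 := by
      have hne : a ≠ 0 := by positivity
      unfold sinc
      rw [if_neg hne, div_pow, div_le_div_iff₀ (by positivity) (by positivity)]
      nlinarith [Real.sin_sq_le_one a, sq_nonneg a]
    have h4 : sinc a ^ 4 ≤ 1 / a ^ 4 := by
      have : sinc a ^ 4 = (sinc a ^ 2) ^ 2 := by ring
      rw [this]
      calc (sinc a ^ 2) ^ 2 ≤ (1 / a ^ 2) ^ 2 := by
            apply pow_le_pow_left₀ (sq_nonneg _) hsq
        _ = 1 / a ^ 4 := by rw [div_pow]; ring_nf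
    have ha2' : (4:ℝ) ≤ a ^ 2 := by nlinarith
    have ha4 : (16:ℝ) ≤ a ^ 4 := by nlinarith
    have : (1:ℝ) / a ^ 4 ≤ 1 / 16 := by
      apply div_le_div_of_nonneg_left (by norm_num) (by norm_num) ha4
    refine h4.trans (this.trans ?_)
    have : 1 / (256 * (d : ℝ) ^ 3) ≤ 1 / 256 := by
      apply div_le_div_of_nonneg_left (by norm_num) (by norm_num)
      nlinarith
    linarith

theorem stmt_5 (d : ℕ) (hd : 1 ≤ d) (h : EuclideanSpace ℝ (Fin d))
    (hnorm : ‖h‖ ≥ Real.sqrt 3 / (2 * d)) :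
    ∏ i, sinc (h i / 4) ^ 4 ≤ 1 - 1 / (256 * (d : ℝ) ^ 3) := by
  have hd1 : (1 : ℝ) ≤ (d : ℝ) := by exact_mod_cast hd
  have hdpos : (0:ℝ) < (d:ℝ) := by linarith
  -- sum of squares bound
  have hnorm_sq : 3 / (4 * (d:ℝ) ^ 2) ≤ ∑ i, (h i) ^ 2 := by
    have hne : ‖h‖ = Real.sqrt (∑ i, ‖h i‖ ^ 2) := EuclideanSpace.norm_eq h
    have hsum_nn : (0:ℝ) ≤ ∑ i, (h i) ^ 2 := Finset.sum_nonneg fun i _ => sq_nonneg _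
    have h3 : Real.sqrt 3 / (2 * d) ≤ Real.sqrt (∑ i, (h i) ^ 2) := by
      calc Real.sqrt 3 / (2 * d) ≤ ‖h‖ := hnorm
        _ = Real.sqrt (∑ i, ‖h i‖ ^ 2) := hne
        _ = Real.sqrt (∑ i, (h i) ^ 2) := by
            congr 1; apply Finset.sum_congr rfl; intro i _; rw [Real.norm_eq_abs, sq_abs]
    have hL : (0:ℝ) ≤ Real.sqrt 3 / (2 * d) := by positivity
    have := mul_self_le_mul_self hL h3
    rw [Real.mul_self_sqrt hsum_nn] at this
    calc 3 / (4 * (d:ℝ) ^ 2) = (Real.sqrt 3 / (2 * d)) * (Real.sqrt 3 / (2 * d)) := by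
          rw [div_mul_div_comm, Real.mul_self_sqrt (by norm_num)]; ring_nf
      _ ≤ ∑ i, (h i) ^ 2 := this
  -- find a big coordinate
  have hex : ∃ i : Fin d, 3 / (4 * (d:ℝ) ^ 3) ≤ (h i) ^ 2 := by
    by_contra hcon
    push_neg at hcon
    have hne : (Finset.univ : Finset (Fin d)).Nonempty := by
      rw [Finset.univ_nonempty_iff]
      exact Fin.pos_iff_nonempty.mp hd
    have hlt : ∑ i, (h i) ^ 2 < ∑ _i : Fin d, 3 / (4 * (d:ℝ) ^ 3) :=
      Finset.sum_lt_sum_of_nonempty hne fun i _ => hcon i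
    rw [Finset.sum_const, Finset.card_univ, Fintype.card_fin, nsmul_eq_mul] at hlt
    have : (d:ℝ) * (3 / (4 * (d:ℝ) ^ 3)) = 3 / (4 * (d:ℝ) ^ 2) := by
      field_simp
    rw [this] at hlt
    linarith
  obtain ⟨i0, hi0⟩ := hex
  have hkey : sinc (h i0 / 4) ^ 4 ≤ 1 - 1 / (256 * (d : ℝ) ^ 3) := by
    apply key d hd
    have : (h i0 / 4) ^ 2 = (h i0) ^ 2 / 16 := by ring
    rw [this]
    have hdpos3 : (0:ℝ) < 4 * (d:ℝ) ^ 3 := by positivity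
    rw [div_le_div_iff₀ (by positivity) (by norm_num)]
    rw [div_le_iff₀ hdpos3] at hi0
    nlinarith
  have hfactor_le : ∀ i : Fin d, sinc (h i / 4) ^ 4 ≤ 1 := fun i => by
    have := sinc_sq_le_one (h i / 4)
    nlinarith [sq_nonneg (sinc (h i / 4))]
  have hfactor_nn : ∀ i : Fin d, 0 ≤ sinc (h i / 4) ^ 4 := fun i => by positivity
  have hsplit := Finset.mul_prod_erase Finset.univ (fun i => sinc (h i / 4) ^ 4)
    (Finset.mem_univ i0)
  have hrest : ∏ i ∈ Finset.univ.erase i0, sinc (h i / 4) ^ 4 ≤ 1 :=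
    Finset.prod_le_one (fun i _ => hfactor_nn i) (fun i _ => hfactor_le i)
  have hrest_nn : 0 ≤ ∏ i ∈ Finset.univ.erase i0, sinc (h i / 4) ^ 4 :=
    Finset.prod_nonneg fun i _ => hfactor_nn i
  calc ∏ i, sinc (h i / 4) ^ 4
      = sinc (h i0 / 4) ^ 4 * ∏ i ∈ Finset.univ.erase i0, sinc (h i / 4) ^ 4 := hsplit.symm
    _ ≤ sinc (h i0 / 4) ^ 4 * 1 := by
        exact mul_le_mul_of_nonneg_left hrest (hfactor_nn i0)
    _ = sinc (h i0 / 4) ^ 4 := mul_one _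
    _ ≤ 1 - 1 / (256 * (d : ℝ) ^ 3) := hkey
end

section
/- Let d ≥ 1 be an integer and let h ∈ ℝ^d satisfy ‖h‖₂ < √3/(2d). Then for every v ∈ ℝ^d, −Σ_{i=1}^{d} Σ_{j=1}^{d} v_i·v_j·(∂_i∂_j Ψ₁)(h) ≥ (23/384)·‖v‖₂², where ∂_i∂_j Ψ₁ denotes the second-order partial derivatives of Ψ₁(u) = ∏_{i=1}^{d} sinc(u_i/4)⁴. -/
/-- The sinc-4 kernel (bandwidth one) on `ℝ^d`. -/
noncomputable def Psi1 (d : ℕ) (u : EuclideanSpace ℝ (Fin d)) : ℝ :=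
  ∏ i, sinc (u i / 4) ^ 4

/-!
`Ψ₁(u) = ∏ φ(uᵢ)` with `φ(t) = sinc(t/4)⁴` (`psi1Factor`), so its Hessian at `h` has diagonal
entries `φ''(hᵢ) ∏_{k≠i} φ(h_k)` and off-diagonal entries `φ'(hᵢ) φ'(hⱼ) ∏_{k≠i,j} φ(h_k)`.
Since `d ≥ 1`, `‖h‖² < 3/4`, so every `hᵢ/4` lies in `[-13/60, 13/60]`, where the Taylor bounds
for `sin` and `cos` give `φ'' ≤ -1089/16000`, `|φ'(t)| ≤ 7|t|/80` and `φ(t) ≥ 1 - 89t²/2000`.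
`sinc` is analytic (it is the divided slope of `sin` at `0`), so these bounds, proved from
explicit formulas for `t > 0`, extend to `t < 0` by parity and to `t = 0` by continuity.
By the Weierstrass product inequality the diagonal entries are at most
`-(1089/16000)(7733/8000)`, and by Cauchy–Schwarz the off-diagonal part of the quadratic form is
at most `∑ φ'(hᵢ)² ‖v‖² ≤ (147/25600) ‖v‖²`; the difference exceeds `23/384`.
-/

open Set Topology

section EvenOdd

variable {𝕜 F : Type*} [NontriviallyNormedField 𝕜] [NormedAddCommGroup F] [NormedSpace 𝕜 F]
  {f : 𝕜 → F}

theorem Function.Even.deriv (hf : f.Even) : (deriv f).Odd := fun x => by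
  have := deriv_comp_neg f (-x)
  simp only [neg_neg, hf.eq] at this
  exact this

theorem Function.Odd.deriv (hf : f.Odd) : (deriv f).Even := fun x => by
  have := deriv_comp_neg f x
  simp only [hf.eq] at this
  rw [← Pi.neg_def, deriv.neg, neg_inj] at this
  exact this.symm

end EvenOdd

theorem Function.Even.le_of_forall_mem_Ioc {f g : ℝ → ℝ} (hf : f.Even) (hg : g.Even)
    (hfc : Continuous f) (hgc : Continuous g) {r : ℝ} (hr : 0 < r)
    (h : ∀ x ∈ Ioc 0 r, f x ≤ g x) {x : ℝ} (hx : |x| ≤ r) : f x ≤ g x := by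
  have habs : f |x| ≤ g |x| := by
    refine le_on_closure h hfc.continuousOn hgc.continuousOn ?_
    rw [closure_Ioc hr.ne]
    exact ⟨abs_nonneg x, hx⟩
  rcases abs_choice x with hx' | hx' <;> rw [hx'] at habs
  · exact habs
  · rwa [hf.eq, hg.eq] at habs

theorem Finset.one_sub_sum_le_prod_one_sub {ι R : Type*} [CommRing R] [LinearOrder R]
    [IsStrictOrderedRing R] (s : Finset ι) {ε : ι → R} (h0 : ∀ i ∈ s, 0 ≤ ε i)
    (h1 : ∀ i ∈ s, ε i ≤ 1) : 1 - ∑ i ∈ s, ε i ≤ ∏ i ∈ s, (1 - ε i) := by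
  induction s using Finset.cons_induction with
  | empty => simp
  | cons a s _ ih =>
    rw [prod_cons, sum_cons]
    have ih' := ih (fun i hi => h0 i (mem_cons_of_mem hi)) (fun i hi => h1 i (mem_cons_of_mem hi))
    have ha0 := h0 a (mem_cons_self a s)
    have hs0 : 0 ≤ ∑ i ∈ s, ε i := sum_nonneg fun i hi => h0 i (mem_cons_of_mem hi)
    nlinarith [mul_le_mul_of_nonneg_left ih' (sub_nonneg.mpr (h1 a (mem_cons_self a s)))]

theorem sum_mul_mul_le_of_diag_le_of_abs_le {ι : Type*} [Fintype ι] {H : ι → ι → ℝ} {b : ι → ℝ}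
    {c : ℝ} (hdiag : ∀ i, H i i ≤ -c) (hoff : ∀ i j, i ≠ j → |H i j| ≤ b i * b j) (v : ι → ℝ) :
    ∑ i, ∑ j, v i * v j * H i j ≤ (∑ i, b i ^ 2 - c) * ∑ i, v i ^ 2 := by
  classical
  have hterm : ∀ i j, v i * v j * H i j ≤
      (if i = j then -c * v i ^ 2 else 0) + |v i| * b i * (|v j| * b j) := by
    intro i j
    rcases eq_or_ne i j with rfl | hij
    · rw [if_pos rfl]
      nlinarith [mul_le_mul_of_nonneg_left (hdiag i) (sq_nonneg (v i)), sq_nonneg (|v i| * b i)]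
    · rw [if_neg hij, zero_add]
      calc v i * v j * H i j ≤ |v i * v j * H i j| := le_abs_self _
        _ = |v i| * |v j| * |H i j| := by rw [abs_mul, abs_mul]
        _ ≤ |v i| * |v j| * (b i * b j) := by gcongr; exact hoff i j hij
        _ = |v i| * b i * (|v j| * b j) := by ring
  have hCS := Finset.sum_mul_sq_le_sq_mul_sq Finset.univ (fun i => |v i|) b
  simp only [sq_abs] at hCS
  calc ∑ i, ∑ j, v i * v j * H i j
      ≤ ∑ i, ∑ j, ((if i = j then -c * v i ^ 2 else 0) + |v i| * b i * (|v j| * b j)) :=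
        Finset.sum_le_sum fun i _ => Finset.sum_le_sum fun j _ => hterm i j
    _ = -c * ∑ i, v i ^ 2 + (∑ i, |v i| * b i) ^ 2 := by
        rw [sq (∑ i, |v i| * b i), Finset.sum_mul_sum, Finset.mul_sum]
        simp [Finset.sum_add_distrib]
    _ ≤ (∑ i, b i ^ 2 - c) * ∑ i, v i ^ 2 := by linarith

section ProductOfCoordinates

variable {ι : Type*} [Fintype ι] [DecidableEq ι]

open Finset EuclideanSpace

theorem fderiv_prod_apply_single {g : ι → ℝ → ℝ} (hg : ∀ k, Differentiable ℝ (g k))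
    (u : EuclideanSpace ℝ ι) (i : ι) :
    fderiv ℝ (fun w : EuclideanSpace ℝ ι => ∏ k, g k (w k)) u (single i 1) =
      deriv (g i) (u i) * ∏ k ∈ univ.erase i, g k (u k) := by
  have hk : ∀ k, HasFDerivAt (fun w : EuclideanSpace ℝ ι => g k (w k))
      (deriv (g k) (u k) • (proj k : EuclideanSpace ℝ ι →L[ℝ] ℝ)) u :=
    fun k => (hg k (u k)).hasDerivAt.comp_hasFDerivAt u
      (proj k : EuclideanSpace ℝ ι →L[ℝ] ℝ).hasFDerivAt
  rw [(HasFDerivAt.finsetProd fun k _ => hk k).fderiv]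
  simp [mul_comm]

theorem fderiv_fderiv_prod_apply_single {f : ℝ → ℝ} (hf : ContDiff ℝ 2 f)
    (u : EuclideanSpace ℝ ι) (i j : ι) :
    fderiv ℝ (fderiv ℝ fun w : EuclideanSpace ℝ ι => ∏ k, f (w k)) u (single i 1) (single j 1) =
      deriv (Function.update (fun _ => f) j (deriv f) i) (u i) *
        ∏ k ∈ univ.erase i, Function.update (fun _ => f) j (deriv f) k (u k) := by
  set F := fun w : EuclideanSpace ℝ ι => ∏ k, f (w k)
  set G := Function.update (fun _ => f) j (deriv f)
  have hf' : Differentiable ℝ f := hf.differentiable (by norm_num)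
  have hG : ∀ k, Differentiable ℝ (G k) := by
    intro k
    rcases eq_or_ne k j with rfl | hk
    · simpa [G] using (hf.deriv' (n := 1)).differentiable one_ne_zero
    · simpa [G, hk] using hf'
  have hF : ContDiff ℝ 2 F :=
    contDiff_prod fun k _ => hf.comp (proj k : EuclideanSpace ℝ ι →L[ℝ] ℝ).contDiff
  have hdF : Differentiable ℝ (fderiv ℝ F) :=
    (hF.fderiv_right (m := 1) le_rfl).differentiable one_ne_zero
  have hpartial : (fun w => fderiv ℝ F w (single j 1)) = fun w => ∏ k, G k (w k) := by
    funext w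
    rw [fderiv_prod_apply_single (fun _ => hf'), ← mul_prod_erase univ _ (mem_univ j)]
    simp only [G, Function.update_self]
    congr 1
    exact prod_congr rfl fun k hk => by rw [Function.update_of_ne (ne_of_mem_erase hk)]
  rw [← fderiv_prod_apply_single hG, ← hpartial,
    fderiv_clm_apply (hdF u) (differentiableAt_const _)]
  simp

theorem iteratedFDeriv_two_prod_apply_single_self {f : ℝ → ℝ} (hf : ContDiff ℝ 2 f)
    (u : EuclideanSpace ℝ ι) (i : ι) :
    iteratedFDeriv ℝ 2 (fun w : EuclideanSpace ℝ ι => ∏ k, f (w k)) u ![single i 1, single i 1] =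
      deriv (deriv f) (u i) * ∏ k ∈ univ.erase i, f (u k) := by
  rw [iteratedFDeriv_two_apply]
  simp only [Matrix.cons_val_zero, Matrix.cons_val_one]
  rw [fderiv_fderiv_prod_apply_single hf, Function.update_self]
  congr 1
  exact prod_congr rfl fun k hk => by rw [Function.update_of_ne (ne_of_mem_erase hk)]

theorem iteratedFDeriv_two_prod_apply_single_of_ne {f : ℝ → ℝ} (hf : ContDiff ℝ 2 f)
    (u : EuclideanSpace ℝ ι) {i j : ι} (hij : i ≠ j) :
    iteratedFDeriv ℝ 2 (fun w : EuclideanSpace ℝ ι => ∏ k, f (w k)) u ![single i 1, single j 1] =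
      deriv f (u i) * deriv f (u j) * ∏ k ∈ (univ.erase i).erase j, f (u k) := by
  rw [iteratedFDeriv_two_apply]
  simp only [Matrix.cons_val_zero, Matrix.cons_val_one]
  have hj : j ∈ univ.erase i := mem_erase.mpr ⟨hij.symm, mem_univ j⟩
  rw [fderiv_fderiv_prod_apply_single hf, Function.update_of_ne hij, ← mul_prod_erase _ _ hj,
    Function.update_self, mul_assoc]
  congr 2
  exact prod_congr rfl fun k hk => by rw [Function.update_of_ne (ne_of_mem_erase hk)]

theorem abs_iteratedFDeriv_two_prod_apply_single_of_ne_le {f : ℝ → ℝ} (hf : ContDiff ℝ 2 f)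
    (hf1 : ∀ x, |f x| ≤ 1) (u : EuclideanSpace ℝ ι) {i j : ι} (hij : i ≠ j) :
    |iteratedFDeriv ℝ 2 (fun w : EuclideanSpace ℝ ι => ∏ k, f (w k)) u ![single i 1, single j 1]| ≤
      |deriv f (u i)| * |deriv f (u j)| := by
  rw [iteratedFDeriv_two_prod_apply_single_of_ne hf u hij, abs_mul, abs_mul, abs_prod]
  exact mul_le_of_le_one_right (by positivity)
    (prod_le_one (fun _ _ => abs_nonneg _) fun k _ => hf1 _)

end ProductOfCoordinates

theorem sinc_eq_real_sinc : sinc = Real.sinc := rfl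

theorem sinc_even : sinc.Even := Real.sinc_neg

theorem analyticAt_sinc (x : ℝ) : AnalyticAt ℝ sinc x := by
  rcases eq_or_ne x 0 with rfl | hx
  · obtain ⟨p, hp⟩ := Real.analyticAt_sin (x := 0)
    rw [sinc_eq_real_sinc, Real.sinc_eq_dslope]
    exact hp.has_fpower_series_dslope_fslope.analyticAt
  · have : sinc =ᶠ[𝓝 x] fun y => Real.sin y / y := by
      filter_upwards [isOpen_ne.mem_nhds hx] with y hy
      exact Real.sinc_of_ne_zero hy
    exact (Real.analyticAt_sin.div analyticAt_id hx).congr this.symm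

theorem contDiff_sinc {n : WithTop ℕ∞} : ContDiff ℝ n sinc :=
  AnalyticOnNhd.contDiff fun x _ => analyticAt_sinc x

theorem hasDerivAt_sinc_of_ne {x : ℝ} (hx : x ≠ 0) :
    HasDerivAt sinc ((x * Real.cos x - Real.sin x) / x ^ 2) x := by
  have hsinc : (fun y => Real.sin y / y) =ᶠ[𝓝 x] sinc := by
    filter_upwards [isOpen_ne.mem_nhds hx] with y hy
    exact (Real.sinc_of_ne_zero hy).symm
  refine (((Real.hasDerivAt_sin x).div (hasDerivAt_id x) hx).congr_of_eventuallyEq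
    hsinc.symm).congr_deriv ?_
  simp only [id]
  ring

theorem hasDerivAt_deriv_sinc_of_ne {x : ℝ} (hx : x ≠ 0) :
    HasDerivAt (deriv sinc)
      ((2 * Real.sin x - 2 * x * Real.cos x - x ^ 2 * Real.sin x) / x ^ 3) x := by
  have hderiv : (fun y => (y * Real.cos y - Real.sin y) / y ^ 2) =ᶠ[𝓝 x] deriv sinc := by
    filter_upwards [isOpen_ne.mem_nhds hx] with y hy
    exact (hasDerivAt_sinc_of_ne hy).deriv.symm
  have hnum : HasDerivAt (fun y => y * Real.cos y - Real.sin y)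
      (1 * Real.cos x + x * -Real.sin x - Real.cos x) x :=
    ((hasDerivAt_id x).fun_mul (Real.hasDerivAt_cos x)).fun_sub (Real.hasDerivAt_sin x)
  refine ((hnum.div (hasDerivAt_pow 2 x) (pow_ne_zero 2 hx)).congr_of_eventuallyEq
    hderiv.symm).congr_deriv ?_
  field_simp
  ring

theorem one_sub_mul_sq_le_sinc {x : ℝ} (hx : |x| ≤ 13 / 60) :
    1 - 89 / 500 * x ^ 2 ≤ sinc x := by
  refine Function.Even.le_of_forall_mem_Ioc (f := fun x => 1 - 89 / 500 * x ^ 2)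
    (fun x => by simp only [neg_sq]) sinc_even (by fun_prop) Real.continuous_sinc
    (by norm_num) (fun y ⟨hy0, hy1⟩ => ?_) hx
  have hs := abs_le.mp (Real.sin_bound (x := y) (by rw [abs_of_pos hy0]; linarith))
  rw [abs_of_pos hy0] at hs
  rw [sinc_eq_real_sinc, Real.sinc_of_ne_zero hy0.ne', le_div_iff₀ hy0]
  nlinarith [pow_pos hy0 3, pow_pos hy0 4]

theorem abs_deriv_sinc_le {x : ℝ} (hx : |x| ≤ 13 / 60) : |deriv sinc x| ≤ 7 / 20 * |x| := by
  refine Function.Even.le_of_forall_mem_Ioc (f := fun x => |deriv sinc x|)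
    (g := fun x => 7 / 20 * |x|)
    (fun x => by simp only [sinc_even.deriv.eq, abs_neg]) (fun x => by simp only [abs_neg])
    ((contDiff_sinc (n := 1)).continuous_deriv le_rfl).abs (by fun_prop) (by norm_num)
    (fun y ⟨hy0, hy1⟩ => ?_) hx
  have hy1' : |y| ≤ 1 := by rw [abs_of_pos hy0]; linarith
  have hs := abs_le.mp (Real.sin_bound hy1')
  have hc := abs_le.mp (Real.cos_bound hy1')
  rw [abs_of_pos hy0] at hs hc
  have hnum : |y * Real.cos y - Real.sin y| ≤ 7 / 20 * y ^ 3 := by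
    rw [abs_le]
    constructor <;> nlinarith [pow_pos hy0 3, pow_pos hy0 4, pow_pos hy0 5,
      mul_le_mul_of_nonneg_left hc.1 hy0.le, mul_le_mul_of_nonneg_left hc.2 hy0.le]
  rw [(hasDerivAt_sinc_of_ne hy0.ne').deriv, abs_div, abs_of_pos (pow_pos hy0 2),
    div_le_iff₀ (pow_pos hy0 2), abs_of_pos hy0]
  linarith

theorem deriv_deriv_sinc_le {x : ℝ} (hx : |x| ≤ 13 / 60) :
    deriv (deriv sinc) x ≤ -(297 / 1000) := by
  refine Function.Even.le_of_forall_mem_Ioc sinc_even.deriv.deriv (Function.Even.const _)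
    ((contDiff_sinc (n := 2)).deriv'.continuous_deriv le_rfl) continuous_const (by norm_num)
    (fun y ⟨hy0, hy1⟩ => ?_) hx
  have hy1' : |y| ≤ 1 := by rw [abs_of_pos hy0]; linarith
  have hs := abs_le.mp (Real.sin_bound hy1')
  have hc := abs_le.mp (Real.cos_bound hy1')
  rw [abs_of_pos hy0] at hs hc
  have hcoef : 0 ≤ 2 - y ^ 2 := by nlinarith
  rw [(hasDerivAt_deriv_sinc_of_ne hy0.ne').deriv, div_le_iff₀ (pow_pos hy0 3)]
  nlinarith [pow_pos hy0 3, pow_pos hy0 4, pow_pos hy0 5, pow_pos hy0 6,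
    mul_le_mul_of_nonneg_left hs.2 hcoef, mul_le_mul_of_nonneg_left hc.1 hy0.le]

noncomputable def psi1Factor (t : ℝ) : ℝ := sinc (t / 4) ^ 4

theorem Psi1_eq_prod (d : ℕ) : Psi1 d = fun u => ∏ k, psi1Factor (u k) := rfl

theorem contDiff_psi1Factor {n : WithTop ℕ∞} : ContDiff ℝ n psi1Factor :=
  (contDiff_sinc.comp (contDiff_id.div_const 4)).pow 4

theorem hasDerivAt_comp_div_four {f : ℝ → ℝ} (hf : Differentiable ℝ f) (t : ℝ) :
    HasDerivAt (fun s => f (s / 4)) (deriv f (t / 4) / 4) t := by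
  refine ((hf (t / 4)).hasDerivAt.comp t ((hasDerivAt_id t).div_const 4)).congr_deriv ?_
  simp [div_eq_mul_inv]

theorem deriv_psi1Factor :
    deriv psi1Factor = fun t => sinc (t / 4) ^ 3 * deriv sinc (t / 4) := by
  funext t
  have hs := hasDerivAt_comp_div_four (contDiff_sinc.differentiable one_ne_zero) t
  refine (hs.fun_pow 4).deriv.trans ?_
  ring

theorem deriv_deriv_psi1Factor (t : ℝ) :
    deriv (deriv psi1Factor) t = (3 * sinc (t / 4) ^ 2 * deriv sinc (t / 4) ^ 2 +
      sinc (t / 4) ^ 3 * deriv (deriv sinc) (t / 4)) / 4 := by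
  have hs := hasDerivAt_comp_div_four (contDiff_sinc.differentiable one_ne_zero) t
  have hds := hasDerivAt_comp_div_four
    ((contDiff_sinc (n := 2)).deriv'.differentiable one_ne_zero) t
  rw [deriv_psi1Factor, ((hs.fun_pow 3).fun_mul hds).deriv]
  ring

theorem abs_psi1Factor_le_one (t : ℝ) : |psi1Factor t| ≤ 1 := by
  rw [psi1Factor, abs_pow]
  exact pow_le_one₀ (abs_nonneg _) (Real.abs_sinc_le_one _)

theorem abs_div_four_le {t : ℝ} (ht : |t| ≤ 13 / 15) : |t / 4| ≤ 13 / 60 := by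
  rw [abs_div, abs_of_pos (four_pos : (0 : ℝ) < 4)]
  linarith

theorem one_sub_mul_sq_le_psi1Factor {t : ℝ} (ht : |t| ≤ 13 / 15) :
    1 - 89 / 2000 * t ^ 2 ≤ psi1Factor t := by
  have hx := abs_div_four_le ht
  have hx2 : (t / 4) ^ 2 ≤ (13 / 60) ^ 2 := by
    rw [← sq_abs]
    exact pow_le_pow_left₀ (abs_nonneg _) hx 2
  have hb0 : 0 ≤ 1 - 89 / 500 * (t / 4) ^ 2 := by nlinarith
  calc 1 - 89 / 2000 * t ^ 2 = 1 + 4 * -(89 / 500 * (t / 4) ^ 2) := by ring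
    _ ≤ (1 + -(89 / 500 * (t / 4) ^ 2)) ^ 4 := one_add_mul_le_pow (by nlinarith) 4
    _ = (1 - 89 / 500 * (t / 4) ^ 2) ^ 4 := by ring
    _ ≤ psi1Factor t := pow_le_pow_left₀ hb0 (one_sub_mul_sq_le_sinc hx) 4

theorem abs_deriv_psi1Factor_le {t : ℝ} (ht : |t| ≤ 13 / 15) :
    |deriv psi1Factor t| ≤ 7 / 80 * |t| := by
  rw [deriv_psi1Factor, abs_mul, abs_pow]
  calc |sinc (t / 4)| ^ 3 * |deriv sinc (t / 4)| ≤ 1 * (7 / 20 * |t / 4|) :=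
        mul_le_mul (pow_le_one₀ (abs_nonneg _) (Real.abs_sinc_le_one _))
          (abs_deriv_sinc_le (abs_div_four_le ht)) (abs_nonneg _) zero_le_one
    _ = 7 / 80 * |t| := by rw [abs_div, abs_of_pos (four_pos : (0 : ℝ) < 4)]; ring

theorem deriv_deriv_psi1Factor_le {t : ℝ} (ht : |t| ≤ 13 / 15) :
    deriv (deriv psi1Factor) t ≤ -(1089 / 16000) := by
  have hx := abs_div_four_le ht
  rw [deriv_deriv_psi1Factor]
  set x := t / 4
  have hx2 : x ^ 2 ≤ 169 / 3600 := by
    rw [← sq_abs]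
    nlinarith [abs_nonneg x]
  have hD2 : deriv sinc x ^ 2 ≤ 49 / 400 * x ^ 2 := by
    rw [← sq_abs, ← sq_abs x]
    nlinarith [abs_deriv_sinc_le hx, abs_nonneg (deriv sinc x), abs_nonneg x]
  have hDD := deriv_deriv_sinc_le hx
  set s := sinc x
  have hs1 : s ≤ 1 := Real.sinc_le_one x
  have hlow : 1 - 89 / 500 * x ^ 2 ≤ s := one_sub_mul_sq_le_sinc hx
  have hs0 : 0 ≤ s := by nlinarith
  have hs3 : 1 - 3 * (89 / 500 * x ^ 2) ≤ s ^ 3 := by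
    have hb0 : 0 ≤ 1 - 89 / 500 * x ^ 2 := by nlinarith
    nlinarith [pow_le_pow_left₀ hb0 hlow 3, sq_nonneg x, sq_nonneg (89 / 500 * x ^ 2)]
  have hfirst : 3 * s ^ 2 * deriv sinc x ^ 2 ≤ 3 * (49 / 400 * x ^ 2) := by
    nlinarith [mul_le_of_le_one_left (sq_nonneg (deriv sinc x)) (pow_le_one₀ (n := 2) hs0 hs1)]
  have hsecond : s ^ 3 * deriv (deriv sinc) x ≤ (1 - 3 * (89 / 500 * x ^ 2)) * -(297 / 1000) := by
    nlinarith [mul_le_mul_of_nonneg_left hDD (pow_nonneg hs0 3)]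
  nlinarith

theorem abs_apply_le_of_norm_sq_le {d : ℕ} {h : EuclideanSpace ℝ (Fin d)} (hh : ‖h‖ ^ 2 ≤ 3 / 4)
    (i : Fin d) : |h i| ≤ 13 / 15 := by
  have hi : |h i| ≤ ‖h‖ := PiLp.norm_apply_le h i
  nlinarith [norm_nonneg h, abs_nonneg (h i)]

section HessianPsi1

open Finset EuclideanSpace

variable {d : ℕ} {h : EuclideanSpace ℝ (Fin d)}

theorem iteratedFDeriv_two_Psi1_apply_single_self_le (hh : ‖h‖ ^ 2 ≤ 3 / 4) (i : Fin d) :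
    iteratedFDeriv ℝ 2 (Psi1 d) h ![single i 1, single i 1] ≤
      -(1089 / 16000 * (7733 / 8000)) := by
  rw [Psi1_eq_prod, iteratedFDeriv_two_prod_apply_single_self contDiff_psi1Factor]
  have hsum : ∑ k ∈ univ.erase i, 89 / 2000 * h k ^ 2 ≤ 89 / 2000 * (3 / 4) := by
    rw [← mul_sum]
    gcongr
    calc ∑ k ∈ univ.erase i, h k ^ 2 ≤ ∑ k, h k ^ 2 :=
          sum_le_sum_of_subset_of_nonneg (erase_subset i univ) fun k _ _ => sq_nonneg (h k)
      _ ≤ 3 / 4 := (EuclideanSpace.real_norm_sq_eq h).symm.trans_le hh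
  have hcoord := abs_apply_le_of_norm_sq_le hh
  have hfactor : ∀ k, 0 ≤ 1 - 89 / 2000 * h k ^ 2 := fun k => by
    nlinarith [hcoord k, sq_abs (h k), abs_nonneg (h k)]
  have hprod : 7733 / 8000 ≤ ∏ k ∈ univ.erase i, psi1Factor (h k) :=
    calc (7733 / 8000 : ℝ) ≤ 1 - ∑ k ∈ univ.erase i, 89 / 2000 * h k ^ 2 := by linarith
      _ ≤ ∏ k ∈ univ.erase i, (1 - 89 / 2000 * h k ^ 2) :=
          one_sub_sum_le_prod_one_sub _ (fun k _ => by positivity)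
            fun k _ => by linarith [hfactor k]
      _ ≤ ∏ k ∈ univ.erase i, psi1Factor (h k) :=
          Finset.prod_le_prod (fun k _ => hfactor k)
            fun k _ => one_sub_mul_sq_le_psi1Factor (hcoord k)
  nlinarith [mul_le_mul_of_nonneg_right (deriv_deriv_psi1Factor_le (hcoord i))
    (hprod.trans' (by norm_num))]

theorem sum_sq_abs_deriv_psi1Factor_le (hh : ‖h‖ ^ 2 ≤ 3 / 4) :
    ∑ i, |deriv psi1Factor (h i)| ^ 2 ≤ 147 / 25600 :=
  calc ∑ i, |deriv psi1Factor (h i)| ^ 2 ≤ ∑ i, 49 / 6400 * h i ^ 2 := by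
        gcongr with i
        rw [← sq_abs (h i)]
        nlinarith [abs_deriv_psi1Factor_le (abs_apply_le_of_norm_sq_le hh i), abs_nonneg (h i),
          abs_nonneg (deriv psi1Factor (h i))]
    _ ≤ 147 / 25600 := by
        rw [← mul_sum, ← EuclideanSpace.real_norm_sq_eq]
        linarith

end HessianPsi1

theorem stmt_6_general (d : ℕ) (h : EuclideanSpace ℝ (Fin d))
    (hnorm : ‖h‖ < Real.sqrt 3 / (2 * d)) (v : EuclideanSpace ℝ (Fin d)) :
    -(∑ i, ∑ j, v i * v j *
        iteratedFDeriv ℝ 2 (Psi1 d) h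
          ![EuclideanSpace.single i (1 : ℝ), EuclideanSpace.single j (1 : ℝ)]) ≥
      (23 / 384) * ‖v‖ ^ 2 := by
  have hd : (1 : ℝ) ≤ d := by
    rcases Nat.eq_zero_or_pos d with rfl | hd
    · simp only [Nat.cast_zero, mul_zero, div_zero] at hnorm
      exact absurd hnorm (norm_nonneg h).not_gt
    · exact_mod_cast hd
  have hh : ‖h‖ ^ 2 ≤ 3 / 4 := by
    have hlt : ‖h‖ < Real.sqrt 3 / 2 :=
      hnorm.trans_le (div_le_div_of_nonneg_left (Real.sqrt_nonneg 3) two_pos (by linarith))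
    nlinarith [Real.sq_sqrt (show (0 : ℝ) ≤ 3 by norm_num), norm_nonneg h]
  have hform := sum_mul_mul_le_of_diag_le_of_abs_le
    (H := fun i j => iteratedFDeriv ℝ 2 (Psi1 d) h
      ![EuclideanSpace.single i (1 : ℝ), EuclideanSpace.single j (1 : ℝ)])
    (iteratedFDeriv_two_Psi1_apply_single_self_le hh)
    (fun i j hij => abs_iteratedFDeriv_two_prod_apply_single_of_ne_le contDiff_psi1Factor
      abs_psi1Factor_le_one h hij) (fun i => v i)
  have hv : 0 ≤ ∑ i, v i ^ 2 := by positivity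
  rw [EuclideanSpace.real_norm_sq_eq v]
  nlinarith [sum_sq_abs_deriv_psi1Factor_le hh]

theorem stmt_6 (d : ℕ) (hd : 1 ≤ d) (h : EuclideanSpace ℝ (Fin d))
    (hnorm : ‖h‖ < Real.sqrt 3 / (2 * d)) (v : EuclideanSpace ℝ (Fin d)) :
    -(∑ i, ∑ j, v i * v j *
        iteratedFDeriv ℝ 2 (Psi1 d) h
          ![EuclideanSpace.single i (1 : ℝ), EuclideanSpace.single j (1 : ℝ)]) ≥
      (23 / 384) * ‖v‖ ^ 2 :=
  stmt_6_general d h hnorm v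
end

section
/- For every natural number n and every real x ≠ 0, the n-th derivative of sinc satisfies |sinc⁽ⁿ⁾(x)| ≤ (n + 1)/|x|. -/
open Real hiding sinc
open intervalIntegral Set
open scoped Interval

noncomputable def sincDerivIntegrand (n : ℕ) (x t : ℝ) : ℝ :=
  t ^ n * cos (x * t + n * (π / 2))

noncomputable def sincDerivIntegral (n : ℕ) (x : ℝ) : ℝ :=
  ∫ t in (0 : ℝ)..1, sincDerivIntegrand n x t

lemma continuous_sincDerivIntegrand (n : ℕ) (x : ℝ) : Continuous (sincDerivIntegrand n x) := by
  unfold sincDerivIntegrand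
  fun_prop

lemma abs_sincDerivIntegrand_le_one (n : ℕ) (x : ℝ) {t : ℝ} (ht : t ∈ Ι (0 : ℝ) 1) :
    |sincDerivIntegrand n x t| ≤ 1 := by
  rw [uIoc_of_le zero_le_one] at ht
  rw [sincDerivIntegrand, abs_mul, abs_pow]
  exact mul_le_one₀ (pow_le_one₀ (abs_nonneg t) (abs_le.mpr ⟨by linarith [ht.1], ht.2⟩))
    (abs_nonneg _) (abs_cos_le_one _)

lemma hasDerivAt_sincDerivIntegrand (n : ℕ) (x t : ℝ) :
    HasDerivAt (sincDerivIntegrand n · t) (sincDerivIntegrand (n + 1) x t) x := by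
  refine ((((hasDerivAt_mul_const (x := x) t).add_const (n * (π / 2))).cos).const_mul
    (t ^ n)).congr_deriv ?_
  simp only [sincDerivIntegrand]
  push_cast
  rw [add_mul, one_mul, ← add_assoc, cos_add_pi_div_two]
  ring

lemma hasDerivAt_sincDerivIntegral (n : ℕ) (x : ℝ) :
    HasDerivAt (sincDerivIntegral n) (sincDerivIntegral (n + 1) x) x :=
  (hasDerivAt_integral_of_dominated_loc_of_deriv_le (bound := fun _ => 1) Filter.univ_mem
    (.of_forall fun y => (continuous_sincDerivIntegrand n y).aestronglyMeasurable)
    ((continuous_sincDerivIntegrand n x).intervalIntegrable 0 1)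
    (continuous_sincDerivIntegrand (n + 1) x).aestronglyMeasurable
    (.of_forall fun _ ht y _ => abs_sincDerivIntegrand_le_one (n + 1) y ht)
    intervalIntegrable_const
    (.of_forall fun t _ y _ => hasDerivAt_sincDerivIntegrand n y t)).2

lemma abs_sincDerivIntegral_le_one (n : ℕ) (x : ℝ) : |sincDerivIntegral n x| ≤ 1 := by
  simpa [sincDerivIntegral] using norm_integral_le_of_norm_le_const (f := sincDerivIntegrand n x)
    fun _ ht => abs_sincDerivIntegrand_le_one n x ht

lemma sinc_eq_sincDerivIntegral_zero : sinc = sincDerivIntegral 0 := by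
  funext x
  simp only [sincDerivIntegral, sincDerivIntegrand, pow_zero, one_mul, CharP.cast_eq_zero,
    zero_mul, add_zero]
  by_cases hx : x = 0
  · simp [sinc, hx]
  · rw [sinc, if_neg hx, integral_comp_mul_left (fun u => cos u) hx]
    simp [div_eq_inv_mul]

lemma iteratedDeriv_sinc (n : ℕ) : iteratedDeriv n sinc = sincDerivIntegral n := by
  induction n with
  | zero => exact sinc_eq_sincDerivIntegral_zero
  | succ n ih =>
    funext x
    rw [iteratedDeriv_succ, ih]
    exact (hasDerivAt_sincDerivIntegral n x).deriv

lemma hasDerivAt_iteratedDeriv_sinc (n : ℕ) (x : ℝ) :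
    HasDerivAt (iteratedDeriv n sinc) (iteratedDeriv (n + 1) sinc x) x := by
  simpa only [iteratedDeriv_sinc] using hasDerivAt_sincDerivIntegral n x

lemma abs_iteratedDeriv_sinc_le_one (n : ℕ) (x : ℝ) : |iteratedDeriv n sinc x| ≤ 1 := by
  simpa only [iteratedDeriv_sinc] using abs_sincDerivIntegral_le_one n x

lemma mul_sinc (x : ℝ) : x * sinc x = sin x := by
  by_cases hx : x = 0
  · simp [hx]
  · rw [sinc, if_neg hx, mul_div_cancel₀ _ hx]

lemma mul_iteratedDeriv_sinc_succ_add (n : ℕ) (x : ℝ) :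
    x * iteratedDeriv (n + 1) sinc x + (n + 1) * iteratedDeriv n sinc x =
      sin (x + (n + 1) * (π / 2)) := by
  induction n generalizing x with
  | zero =>
    have h : HasDerivAt (fun y => y * sinc y) (1 * sinc x + x * iteratedDeriv 1 sinc x) x :=
      (hasDerivAt_id' x).mul (hasDerivAt_iteratedDeriv_sinc 0 x)
    rw [funext mul_sinc] at h
    have h' := h.unique (hasDerivAt_sin x)
    simp only [zero_add, Nat.cast_zero, one_mul, iteratedDeriv_zero, sin_add_pi_div_two] at h' ⊢
    linarith
  | succ n ih =>
    have h : HasDerivAt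
        (fun y => y * iteratedDeriv (n + 1) sinc y + (n + 1) * iteratedDeriv n sinc y)
        (1 * iteratedDeriv (n + 1) sinc x + x * iteratedDeriv (n + 1 + 1) sinc x +
          (n + 1) * iteratedDeriv (n + 1) sinc x) x :=
      ((hasDerivAt_id' x).mul (hasDerivAt_iteratedDeriv_sinc (n + 1) x)).add
        ((hasDerivAt_iteratedDeriv_sinc n x).const_mul ((n : ℝ) + 1))
    rw [funext ih] at h
    have h' := h.unique ((hasDerivAt_id' x).add_const ((n + 1) * (π / 2))).sin
    push_cast
    rw [show x + (n + 1 + 1) * (π / 2) = x + (n + 1) * (π / 2) + π / 2 by ring,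
      sin_add_pi_div_two]
    linarith

lemma abs_mul_iteratedDeriv_sinc_le (n : ℕ) (x : ℝ) : |x * iteratedDeriv n sinc x| ≤ n + 1 := by
  cases n with
  | zero => simpa [mul_sinc] using abs_sin_le_one x
  | succ n =>
    rw [eq_sub_of_add_eq (mul_iteratedDeriv_sinc_succ_add n x)]
    calc |sin (x + (n + 1) * (π / 2)) - (n + 1) * iteratedDeriv n sinc x|
        ≤ 1 + (n + 1) * 1 := by
          refine (abs_sub _ _).trans (add_le_add (abs_sin_le_one _) ?_)
          rw [abs_mul, abs_of_nonneg (by positivity : (0 : ℝ) ≤ n + 1)]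
          gcongr
          exact abs_iteratedDeriv_sinc_le_one n x
      _ = ↑(n + 1) + 1 := by push_cast; ring

theorem stmt_10 (n : ℕ) (x : ℝ) (hx : x ≠ 0) :
    |iteratedDeriv n sinc x| ≤ (n + 1) / |x| := by
  rw [le_div_iff₀ (abs_pos.mpr hx), mul_comm, ← abs_mul]
  exact abs_mul_iteratedDeriv_sinc_le n x
end
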